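/- arXiv:2110.12143 — 5 statements merged into one kernel-verified Lean document; each statement's English description precedes it below -/
import Mathlib

section
/- Let R and F be real n×n matrices with R symmetric and F skew-symmetric (F^T = -F). If x^{n+1/2} satisfies (R + F) x^{n+1/2} = (R - F) x^{n-1/2}, then (x^{n+1/2})^T R x^{n+1/2} = (x^{n-1/2})^T R x^{n-1/2}; i.e., the quadratic form x ↦ x^T R x is exactly conserved by the source-free update. -/
open Matrix

/-- The quadratic form `x ↦ xᵀ R x` is exactly conserved by the source-free
leapfrog update `(R + F) x⁺ = (R - F) x⁻` when `R` is symmetric and `F` skew-symmetric. -/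
theorem stmt0 {n : ℕ} (R F : Matrix (Fin n) (Fin n) ℝ)
    (hR : Rᵀ = R) (hF : Fᵀ = -F)
    (xm xp : Fin n → ℝ)
    (hupd : (R + F) *ᵥ xp = (R - F) *ᵥ xm) :
    xp ⬝ᵥ (R *ᵥ xp) = xm ⬝ᵥ (R *ᵥ xm) := by
  have key : ∀ (M : Matrix (Fin n) (Fin n) ℝ) (v w : Fin n → ℝ),
      v ⬝ᵥ (M *ᵥ w) = w ⬝ᵥ (Mᵀ *ᵥ v) := by
    intro M v w
    rw [dotProduct_mulVec, ← mulVec_transpose, dotProduct_comm]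
  have h := congrArg (fun y => (xp + xm) ⬝ᵥ y) hupd
  simp only [add_mulVec, sub_mulVec, dotProduct_add, dotProduct_sub,
    add_dotProduct] at h
  have h1 : xm ⬝ᵥ (R *ᵥ xp) = xp ⬝ᵥ (R *ᵥ xm) := by rw [key, hR]
  have h2 : xm ⬝ᵥ (F *ᵥ xp) = -(xp ⬝ᵥ (F *ᵥ xm)) := by
    rw [key, hF, neg_mulVec, dotProduct_neg]
  have h3 : xp ⬝ᵥ (F *ᵥ xp) = -(xp ⬝ᵥ (F *ᵥ xp)) := by
    conv_lhs => rw [key, hF, neg_mulVec, dotProduct_neg]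
  have h4 : xm ⬝ᵥ (F *ᵥ xm) = -(xm ⬝ᵥ (F *ᵥ xm)) := by
    conv_lhs => rw [key, hF, neg_mulVec, dotProduct_neg]
  linarith
end

section
/- Let R be symmetric positive definite and F skew-symmetric, and let G = (R+F)^{-1}(R-F). Then for every vector x, ((G x)^T R (G x)) = x^T R x; consequently every eigenvalue of G has absolute value 1 and all powers G^k are bounded in norm (the scheme is stable). -/
/-!
From `(R + F) G = R - F` and its transpose `Gᵀ (R - F) = R + F` one gets
`Gᵀ (R + F) G = R + F` and `Gᵀ (R - F) G = R - F`; adding them gives `Gᵀ R G = R`, so `G` and all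
its powers are isometries of the inner product `⟪x, y⟫ = xᵀ R y`. Evaluating the complexified
form at an eigenvector shows `|μ|² = 1`, and Cauchy–Schwarz for `⟪·, ·⟫` bounds every entry of an
isometry `M` in terms of `R` alone, since `⟪M e_j, M e_j⟫ = R j j`.
-/

open Matrix
open scoped ComplexOrder

namespace Matrix

variable {ι K : Type*} [Fintype ι]

theorem dotProduct_mulVec_self_eq_zero_of_transpose_eq_neg [CommRing K] [IsAddTorsionFree K]
    {F : Matrix ι ι K} (hF : Fᵀ = -F) (x : ι → K) : x ⬝ᵥ F *ᵥ x = 0 := by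
  rw [← neg_eq_self, ← dotProduct_neg, ← neg_mulVec, ← hF, dotProduct_mulVec, vecMul_transpose,
    dotProduct_comm]

theorem norm_eq_one_of_mulVec_eq_smul {𝕜 : Type*} [RCLike 𝕜] {P A : Matrix ι ι 𝕜} (hP : P.PosDef)
    (hA : Aᴴ * P * A = P) {μ : 𝕜} {v : ι → 𝕜} (hv : v ≠ 0) (h : A *ᵥ v = μ • v) : ‖μ‖ = 1 := by
  have hq : star v ⬝ᵥ P *ᵥ v ≠ 0 := (hP.dotProduct_mulVec_pos hv).ne'
  have hinv : star (A *ᵥ v) ⬝ᵥ P *ᵥ (A *ᵥ v) = star v ⬝ᵥ P *ᵥ v := by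
    rw [star_mulVec, ← dotProduct_mulVec, mulVec_mulVec, mulVec_mulVec, hA]
  have hscale : star (A *ᵥ v) ⬝ᵥ P *ᵥ (A *ᵥ v) = (‖μ‖ ^ 2 : 𝕜) * (star v ⬝ᵥ P *ᵥ v) := by
    rw [h, star_smul, mulVec_smul, smul_dotProduct, dotProduct_smul, smul_eq_mul, smul_eq_mul,
      ← mul_assoc, RCLike.star_def, RCLike.conj_mul]
  have hsq : (‖μ‖ ^ 2 : 𝕜) = 1 := mul_right_cancel₀ hq (by rw [← hscale, hinv, one_mul])
  exact (pow_eq_one_iff_of_nonneg (norm_nonneg μ) two_ne_zero).1 (by exact_mod_cast hsq)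

theorem re_star_dotProduct_map_ofReal_mulVec (R : Matrix ι ι ℝ) (v : ι → ℂ) :
    (star v ⬝ᵥ R.map Complex.ofReal *ᵥ v).re =
      (Complex.re ∘ v) ⬝ᵥ R *ᵥ (Complex.re ∘ v) + (Complex.im ∘ v) ⬝ᵥ R *ᵥ (Complex.im ∘ v) := by
  simp only [dotProduct, mulVec, Finset.mul_sum, Complex.re_sum, ← Finset.sum_add_distrib]
  refine Finset.sum_congr rfl fun i _ => Finset.sum_congr rfl fun j _ => ?_
  simp [Complex.mul_re]

theorem PosDef.map_ofReal {R : Matrix ι ι ℝ} (hR : R.PosDef) : (R.map Complex.ofReal).PosDef := by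
  have hH : (R.map Complex.ofReal).IsHermitian := hR.isHermitian.map _ fun x => by simp
  refine .of_dotProduct_mulVec_pos hH fun v hv => Complex.lt_def.2 ⟨?_, ?_⟩
  · have hparts : Complex.re ∘ v ≠ 0 ∨ Complex.im ∘ v ≠ 0 := by
      by_contra! h
      exact hv (funext fun i => Complex.ext (congrFun h.1 i) (congrFun h.2 i))
    have hnonneg (x : ι → ℝ) : 0 ≤ x ⬝ᵥ R *ᵥ x := by
      simpa using hR.posSemidef.dotProduct_mulVec_nonneg x
    have hpos {x : ι → ℝ} (hx : x ≠ 0) : 0 < x ⬝ᵥ R *ᵥ x := by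
      simpa using hR.dotProduct_mulVec_pos hx
    rw [re_star_dotProduct_map_ofReal_mulVec, Complex.zero_re]
    rcases hparts with h | h
    · exact add_pos_of_pos_of_nonneg (hpos h) (hnonneg _)
    · exact add_pos_of_nonneg_of_pos (hnonneg _) (hpos h)
  · simpa using (hH.im_star_dotProduct_mulVec_self v).symm

variable [DecidableEq ι]

def isometrySubmonoid [CommRing K] (R : Matrix ι ι K) : Submonoid (Matrix ι ι K) where
  carrier := {M | Mᵀ * R * M = R}
  mul_mem' {A B} hA hB := by
    simp only [Set.mem_ofPred_eq, transpose_mul] at *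
    rw [show Bᵀ * Aᵀ * R * (A * B) = Bᵀ * (Aᵀ * R * A) * B by simp only [Matrix.mul_assoc],
      hA, hB]
  one_mem' := by simp

theorem mem_isometrySubmonoid [CommRing K] {R M : Matrix ι ι K} :
    M ∈ isometrySubmonoid R ↔ Mᵀ * R * M = R := Iff.rfl

theorem dotProduct_mulVec_mulVec_of_mem_isometrySubmonoid [CommRing K] {R M : Matrix ι ι K}
    (hM : M ∈ isometrySubmonoid R) (x : ι → K) :
    (M *ᵥ x) ⬝ᵥ R *ᵥ (M *ᵥ x) = x ⬝ᵥ R *ᵥ x := by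
  conv_rhs => rw [← mem_isometrySubmonoid.1 hM, ← mulVec_mulVec, ← mulVec_mulVec,
    dotProduct_mulVec, vecMul_transpose]

theorem cayley_mem_isometrySubmonoid [CommRing K] [IsAddTorsionFree K] {R F : Matrix ι ι K}
    (hR : Rᵀ = R) (hF : Fᵀ = -F) (h : IsUnit (R + F).det) :
    (R + F)⁻¹ * (R - F) ∈ isometrySubmonoid R := by
  set G := (R + F)⁻¹ * (R - F)
  have hG : (R + F) * G = R - F := by
    rw [← Matrix.mul_assoc, mul_nonsing_inv _ h, Matrix.one_mul]
  have hGt : Gᵀ * (R - F) = R + F := by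
    simpa [transpose_mul, hR, hF, ← sub_eq_add_neg] using congrArg transpose hG
  have h2 : (2 : ℕ) • (Gᵀ * R * G) = (2 : ℕ) • R := by
    calc (2 : ℕ) • (Gᵀ * R * G) = Gᵀ * (R + F) * G + Gᵀ * (R - F) * G := by
          simp only [Matrix.mul_add, Matrix.mul_sub, Matrix.add_mul, Matrix.sub_mul]; abel
      _ = (2 : ℕ) • R := by rw [Matrix.mul_assoc Gᵀ (R + F), hG, hGt, hG]; abel
  ext i j
  exact nsmul_right_injective two_ne_zero (congrFun (congrFun h2 i) j)

theorem isUnit_det_add_of_posDef_of_transpose_eq_neg [Field K] [PartialOrder K] [StarRing K]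
    [TrivialStar K] [IsAddTorsionFree K] {R F : Matrix ι ι K} (hR : R.PosDef)
    (hF : Fᵀ = -F) : IsUnit (R + F).det := by
  refine isUnit_iff_ne_zero.2 fun h0 => ?_
  obtain ⟨v, hv, hv0⟩ := exists_mulVec_eq_zero_iff.2 h0
  have h : v ⬝ᵥ (R + F) *ᵥ v = v ⬝ᵥ R *ᵥ v := by
    rw [add_mulVec, dotProduct_add, dotProduct_mulVec_self_eq_zero_of_transpose_eq_neg hF, add_zero]
  have := hR.dotProduct_mulVec_pos hv
  rw [star_trivial, ← h, hv0, dotProduct_zero] at this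
  exact this.false

theorem exists_abs_apply_le_of_mem_isometrySubmonoid {R : Matrix ι ι ℝ} (hR : R.PosDef) :
    ∃ C, ∀ M ∈ isometrySubmonoid R, ∀ i j, |M i j| ≤ C := by
  set B := toBilin' R
  have hB : LinearMap.IsSymm B :=
    LinearMap.BilinForm.isSymm_iff.1 (isSymm_toBilin'_iff_isSymm.2 (by simpa using hR.isHermitian))
  have hs : ∀ x, 0 ≤ B x x := fun x => by
    simpa [B, toBilin'_apply'] using hR.posSemidef.dotProduct_mulVec_nonneg x
  -- `u i` represents the `i`-th coordinate functional with respect to `B`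
  set u : ι → ι → ℝ := fun i => Pi.single i 1 ᵥ* R⁻¹
  refine ⟨√((∑ i, B (u i) (u i)) * ∑ j, R j j), fun M hM i j => Real.abs_le_sqrt ?_⟩
  have hentry : B (u i) (M *ᵥ Pi.single j 1) = M i j := by
    rw [toBilin'_apply', dotProduct_mulVec, vecMul_vecMul,
      nonsing_inv_mul _ ((isUnit_iff_isUnit_det R).1 hR.isUnit), vecMul_one]
    simp
  have hcol : B (M *ᵥ Pi.single j 1) (M *ᵥ Pi.single j 1) = R j j := by
    rw [toBilin'_apply', dotProduct_mulVec_mulVec_of_mem_isometrySubmonoid hM, ← toBilin'_apply',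
      toBilin'_single]
  calc M i j ^ 2 ≤ B (u i) (u i) * R j j := hentry ▸ hcol ▸ B.apply_sq_le_of_symm hs hB _ _
    _ ≤ (∑ i, B (u i) (u i)) * ∑ j, R j j :=
      mul_le_mul (Finset.single_le_sum (fun i _ => hs (u i)) (Finset.mem_univ i))
        (Finset.single_le_sum (f := fun j => R j j) (fun j _ => hR.diag_pos.le)
          (Finset.mem_univ j)) hR.diag_pos.le (Finset.sum_nonneg fun i _ => hs (u i))

theorem map_ofReal_conjTranspose_mul_mul_eq {R M : Matrix ι ι ℝ} (hM : M ∈ isometrySubmonoid R) :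
    (M.map Complex.ofReal)ᴴ * R.map Complex.ofReal * M.map Complex.ofReal =
      R.map Complex.ofReal := by
  rw [← conjTranspose_map _ fun x => by simp, conjTranspose_eq_transpose_of_trivial]
  have h := congrArg (Matrix.map · Complex.ofRealHom) (mem_isometrySubmonoid.1 hM)
  simp only [Matrix.map_mul] at h
  exact h

end Matrix

/-- For `R` symmetric positive definite, `F` skew-symmetric and
`G = (R+F)⁻¹ (R-F)`: the quadratic form `xᵀ R x` is preserved by `G`,
every (complex) eigenvalue of `G` has absolute value `1`, and all powers
`G^k` are bounded (in entries, hence in norm): the scheme is stable. -/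
theorem stmt2 {n : ℕ} (R F : Matrix (Fin n) (Fin n) ℝ)
    (hRsym : Rᵀ = R) (hRpd : ∀ x : Fin n → ℝ, x ≠ 0 → 0 < x ⬝ᵥ (R *ᵥ x))
    (hF : Fᵀ = -F) (G : Matrix (Fin n) (Fin n) ℝ)
    (hG : G = (R + F)⁻¹ * (R - F)) :
    (∀ x : Fin n → ℝ, (G *ᵥ x) ⬝ᵥ (R *ᵥ (G *ᵥ x)) = x ⬝ᵥ (R *ᵥ x)) ∧
    (∀ (μ : ℂ) (v : Fin n → ℂ), v ≠ 0 →
      (G.map (Complex.ofReal : ℝ → ℂ)) *ᵥ v = μ • v → ‖μ‖ = 1) ∧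
    (∃ Cb : ℝ, ∀ (k : ℕ) (i j : Fin n), |(G ^ k) i j| ≤ Cb) := by
  have hR : R.PosDef :=
    .of_dotProduct_mulVec_pos (by simpa [IsHermitian] using hRsym) fun x hx => by
      simpa using hRpd x hx
  have hGmem : G ∈ isometrySubmonoid R :=
    hG ▸ cayley_mem_isometrySubmonoid hRsym hF (isUnit_det_add_of_posDef_of_transpose_eq_neg hR hF)
  obtain ⟨C, hC⟩ := exists_abs_apply_le_of_mem_isometrySubmonoid hR
  exact ⟨dotProduct_mulVec_mulVec_of_mem_isometrySubmonoid hGmem,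
    fun μ v hv hμ => norm_eq_one_of_mulVec_eq_smul hR.map_ofReal
      (map_ofReal_conjTranspose_mul_mul_eq hGmem) hv hμ,
    C, fun k => hC _ (pow_mem hGmem k)⟩
end

section
/- For the one-dimensional model problem, the symmetric matrix R with diagonal blocks (ε Δx)/Δt · I and (χ Δx)/Δt · I (with χ = μ ε²) and off-diagonal block (ε/2) D, where D is the 1-D difference matrix with entries in {-1, 0, 1} and at most two nonzero entries per row, is positive definite whenever Δt < Δx √(μ ε). -/
/-!
Write `x = (u, v)`. The quadratic form of `R` is `a ‖u‖² + b ‖v‖² + ε ⟪v, D u⟫` with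
`a = εΔx/Δt`, `b = με²Δx/Δt`. Every row and column of `D` has absolute sum at most `2`, so
AM-GM with the weight `t = √(με)` (a Schur test) gives `t |⟪v, D u⟫| ≤ t² ‖v‖² + ‖u‖²`.
The CFL condition `Δt < Δx t` is then exactly what makes `t a > ε` and `b > ε t`, so that
`t` times the quadratic form is bounded below by a positive combination of `‖u‖²` and `‖v‖²`.
-/

open Matrix

theorem sum_abs_le_two_of_card_filter_le_one {ι : Type*} [Fintype ι] (f : ι → ℝ)
    (hval : ∀ j, f j = 1 ∨ f j = -1 ∨ f j = 0)
    (hone : (Finset.univ.filter fun j => f j = 1).card ≤ 1)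
    (hneg : (Finset.univ.filter fun j => f j = -1).card ≤ 1) :
    ∑ j, |f j| ≤ 2 := by
  have habs : ∀ j, |f j| = (if f j = 1 then 1 else 0) + (if f j = -1 then 1 else 0) := by
    intro j
    rcases hval j with h | h | h <;> norm_num [h]
  simp only [habs, Finset.sum_add_distrib, Finset.sum_boole]
  have hone' : ((Finset.univ.filter fun j => f j = 1).card : ℝ) ≤ 1 := by exact_mod_cast hone
  have hneg' : ((Finset.univ.filter fun j => f j = -1).card : ℝ) ≤ 1 := by exact_mod_cast hneg
  linarith

theorem two_mul_abs_dotProduct_mulVec_le {m n : Type*} [Fintype m] [Fintype n]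
    (D : Matrix n m ℝ) {r k : ℝ} (hrow : ∀ j, ∑ i, |D j i| ≤ r) (hcol : ∀ i, ∑ j, |D j i| ≤ k)
    (u : m → ℝ) (v : n → ℝ) :
    2 * |v ⬝ᵥ D *ᵥ u| ≤ r * (v ⬝ᵥ v) + k * (u ⬝ᵥ u) := by
  have hpoint : ∀ j i, 2 * |v j * (D j i * u i)| ≤ |D j i| * (v j * v j) + |D j i| * (u i * u i) := by
    intro j i
    have hamgm := two_mul_le_add_sq |v j| |u i|
    rw [sq_abs, sq_abs, pow_two, pow_two] at hamgm
    rw [abs_mul, abs_mul]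
    nlinarith [mul_le_mul_of_nonneg_left hamgm (abs_nonneg (D j i))]
  calc 2 * |v ⬝ᵥ D *ᵥ u| = 2 * |∑ j, ∑ i, v j * (D j i * u i)| := by
        simp only [dotProduct, mulVec, Finset.mul_sum]
    _ ≤ 2 * ∑ j, ∑ i, |v j * (D j i * u i)| := by
        gcongr
        refine (Finset.abs_sum_le_sum_abs _ _).trans (Finset.sum_le_sum fun j _ => ?_)
        exact Finset.abs_sum_le_sum_abs _ _
    _ ≤ ∑ j, ∑ i, (|D j i| * (v j * v j) + |D j i| * (u i * u i)) := by
        simp only [Finset.mul_sum]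
        gcongr with j _ i _
        exact hpoint j i
    _ = ∑ j, (∑ i, |D j i|) * (v j * v j) + ∑ i, (∑ j, |D j i|) * (u i * u i) := by
        simp only [Finset.sum_add_distrib, Finset.sum_mul]
        rw [Finset.sum_comm (f := fun j i => |D j i| * (u i * u i))]
    _ ≤ ∑ j, r * (v j * v j) + ∑ i, k * (u i * u i) := by
        gcongr with j _ i _
        · exact mul_self_nonneg _
        · exact hrow j
        · exact mul_self_nonneg _
        · exact hcol i
    _ = r * (v ⬝ᵥ v) + k * (u ⬝ᵥ u) := by simp only [dotProduct, Finset.mul_sum]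

theorem sumElim_dotProduct_fromBlocks_mulVec {m n : Type*} [Fintype m] [Fintype n]
    [DecidableEq m] [DecidableEq n] (D : Matrix n m ℝ) (a b c : ℝ) (u : m → ℝ) (v : n → ℝ) :
    Sum.elim u v ⬝ᵥ fromBlocks (a • 1) (c • Dᵀ) (c • D) (b • 1) *ᵥ Sum.elim u v
      = a * (u ⬝ᵥ u) + b * (v ⬝ᵥ v) + 2 * c * (v ⬝ᵥ D *ᵥ u) := by
  have htrans : u ⬝ᵥ Dᵀ *ᵥ v = v ⬝ᵥ D *ᵥ u := by
    rw [mulVec_transpose, dotProduct_comm, dotProduct_mulVec]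
  simp only [fromBlocks_mulVec, Sum.elim_comp_inl, Sum.elim_comp_inr, sumElim_dotProduct_sumElim,
    smul_mulVec, one_mulVec, dotProduct_add, dotProduct_smul, smul_eq_mul, htrans]
  ring

theorem posDef_fromBlocks_of_sum_abs_le {m n : Type*} [Fintype m] [Fintype n]
    [DecidableEq m] [DecidableEq n] (D : Matrix n m ℝ) {a b c r k t : ℝ}
    (hrow : ∀ j, ∑ i, |D j i| ≤ r) (hcol : ∀ i, ∑ j, |D j i| ≤ k)
    (ht : 0 < t) (ha : |c| * k < t * a) (hb : |c| * r * t < b) :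
    (fromBlocks (a • 1) (c • Dᵀ) (c • D) (b • 1)).PosDef := by
  refine .of_dotProduct_mulVec_pos ?_ fun x hx => ?_
  · refine .fromBlocks ?_ ?_ ?_
    · simp [IsHermitian]
    · simp
    · simp [IsHermitian]
  · rw [star_trivial, ← Sum.elim_comp_inl_inr x, sumElim_dotProduct_fromBlocks_mulVec]
    set u := x ∘ Sum.inl
    set v := x ∘ Sum.inr
    have hu : 0 ≤ u ⬝ᵥ u := Finset.sum_nonneg fun i _ => mul_self_nonneg (u i)
    have hv : 0 ≤ v ⬝ᵥ v := Finset.sum_nonneg fun j _ => mul_self_nonneg (v j)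
    have huv : 0 < u ⬝ᵥ u + v ⬝ᵥ v := by
      rw [← sumElim_dotProduct_sumElim, Sum.elim_comp_inl_inr]
      exact (Finset.sum_nonneg fun i _ => mul_self_nonneg (x i)).lt_of_ne'
        (dotProduct_self_eq_zero.not.mpr hx)
    have hcross := two_mul_abs_dotProduct_mulVec_le D hrow hcol u (t • v)
    simp only [smul_dotProduct, dotProduct_smul, smul_eq_mul, abs_mul, abs_of_pos ht] at hcross
    have hcS : -(|c| * |v ⬝ᵥ D *ᵥ u|) ≤ c * (v ⬝ᵥ D *ᵥ u) := by
      rw [← abs_mul]; exact neg_abs_le _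
    have hlower : 0 < (t * a - |c| * k) * (u ⬝ᵥ u) + t * (b - |c| * r * t) * (v ⬝ᵥ v) := by
      have hα : 0 < t * a - |c| * k := by linarith
      have hβ : 0 < t * (b - |c| * r * t) := mul_pos ht (by linarith)
      nlinarith [mul_nonneg hα.le hu, mul_nonneg hβ.le hv, mul_pos hα huv]
    refine pos_of_mul_pos_right (a := t) ?_ ht.le
    nlinarith [mul_le_mul_of_nonneg_left hcross (abs_nonneg c), mul_le_mul_of_nonneg_left hcS ht.le]

theorem stmt8_general {p q : ℕ} (ε μ Δx Δt : ℝ)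
    (hε : 0 < ε) (hμ : 0 < μ) (hΔt : 0 < Δt)
    (D : Matrix (Fin q) (Fin p) ℝ)
    (hval : ∀ i j, D i j = 1 ∨ D i j = -1 ∨ D i j = 0)
    (hrow : ∀ i, (Finset.univ.filter fun j => D i j = 1).card ≤ 1 ∧
                 (Finset.univ.filter fun j => D i j = -1).card ≤ 1)
    (hcol : ∀ j, (Finset.univ.filter fun i => D i j = 1).card ≤ 1 ∧
                 (Finset.univ.filter fun i => D i j = -1).card ≤ 1)
    (hCFL : Δt < Δx * Real.sqrt (μ * ε)) :
    (Matrix.fromBlocks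
      ((ε * Δx / Δt) • (1 : Matrix (Fin p) (Fin p) ℝ)) ((ε / 2) • Dᵀ)
      ((ε / 2) • D) ((μ * ε ^ 2 * Δx / Δt) • (1 : Matrix (Fin q) (Fin q) ℝ))).PosDef := by
  set t := Real.sqrt (μ * ε)
  have ht : 0 < t := Real.sqrt_pos.mpr (mul_pos hμ hε)
  have ht2 : t ^ 2 = μ * ε := Real.sq_sqrt (mul_pos hμ hε).le
  refine posDef_fromBlocks_of_sum_abs_le D (r := 2) (k := 2) (t := t)
    (fun i => sum_abs_le_two_of_card_filter_le_one _ (hval i) (hrow i).1 (hrow i).2)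
    (fun j => sum_abs_le_two_of_card_filter_le_one _ (hval · j) (hcol j).1 (hcol j).2) ht ?_ ?_
  all_goals rw [abs_of_pos (half_pos hε)]
  · rw [mul_div_assoc', lt_div_iff₀ hΔt]
    calc ε / 2 * 2 * Δt = ε * Δt := by ring
      _ < ε * (Δx * t) := mul_lt_mul_of_pos_left hCFL hε
      _ = t * (ε * Δx) := by ring
  · rw [lt_div_iff₀ hΔt]
    calc ε / 2 * 2 * t * Δt = ε * t * Δt := by ring
      _ < ε * t * (Δx * t) := mul_lt_mul_of_pos_left hCFL (mul_pos hε ht)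
      _ = μ * ε ^ 2 * Δx := by linear_combination ε * Δx * ht2

/-- 1-D model problem: the P-FDTD system matrix
`R = [[(εΔx/Δt) I, (ε/2) Dᵀ],[(ε/2) D, (χΔx/Δt) I]]` with `χ = με²` and `D`
an incidence-type difference matrix (each row and each column has at most one
`+1` and at most one `-1`, all other entries `0`) is positive definite
whenever `Δt < Δx √(με)`. -/
theorem stmt8 {p q : ℕ} (ε μ Δx Δt : ℝ)
    (hε : 0 < ε) (hμ : 0 < μ) (hΔx : 0 < Δx) (hΔt : 0 < Δt)
    (D : Matrix (Fin q) (Fin p) ℝ)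
    (hval : ∀ i j, D i j = 1 ∨ D i j = -1 ∨ D i j = 0)
    (hrow : ∀ i, (Finset.univ.filter fun j => D i j = 1).card ≤ 1 ∧
                 (Finset.univ.filter fun j => D i j = -1).card ≤ 1)
    (hcol : ∀ j, (Finset.univ.filter fun i => D i j = 1).card ≤ 1 ∧
                 (Finset.univ.filter fun i => D i j = -1).card ≤ 1)
    (hCFL : Δt < Δx * Real.sqrt (μ * ε)) :
    (Matrix.fromBlocks
      ((ε * Δx / Δt) • (1 : Matrix (Fin p) (Fin p) ℝ)) ((ε / 2) • Dᵀ)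
      ((ε / 2) • D) ((μ * ε ^ 2 * Δx / Δt) • (1 : Matrix (Fin q) (Fin q) ℝ))).PosDef :=
  stmt8_general ε μ Δx Δt hε hμ hΔt D hval hrow hcol hCFL
end

section
/- Suppose A : ℝ × ℝ³ → ℝ³ and κ are smooth fields, B = ∇×A, with ∂B/∂t = ∇×(∂A/∂t), ε ∂²A/∂t² = -∇×(μ⁻¹ ∇×A) - ε ∇κ, and χ ∂κ/∂t = -∇·(ε ∂A/∂t) on a bounded region V with constant ε, μ, χ = με² > 0. Then E(t) = ∫_V [ (1/(2μ))|B|² + (ε/2)|∂A/∂t|² + (χ/2)κ² ] dV satisfies dE/dt = ∮_{∂V} ( μ⁻¹ B × ∂A/∂t + ε κ ∂A/∂t ) · (-n̂) dS. -/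
open MeasureTheory
open scoped RealInnerProductSpace

noncomputable abbrev E3 : Type := EuclideanSpace ℝ (Fin 3)

/-- Curl of a vector field on ℝ³. -/
noncomputable def curl3 (X : E3 → E3) (x : E3) : E3 :=
  (WithLp.equiv 2 (Fin 3 → ℝ)).symm
    ![fderiv ℝ (fun y => X y 2) x (EuclideanSpace.single 1 1) -
        fderiv ℝ (fun y => X y 1) x (EuclideanSpace.single 2 1),
      fderiv ℝ (fun y => X y 0) x (EuclideanSpace.single 2 1) -
        fderiv ℝ (fun y => X y 2) x (EuclideanSpace.single 0 1),
      fderiv ℝ (fun y => X y 1) x (EuclideanSpace.single 0 1) -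
        fderiv ℝ (fun y => X y 0) x (EuclideanSpace.single 1 1)]

/-- Divergence of a vector field on ℝ³. -/
noncomputable def div3 (X : E3 → E3) (x : E3) : ℝ :=
  ∑ i, fderiv ℝ X x (EuclideanSpace.single i 1) i

/-- Cross product on ℝ³. -/
noncomputable def cross3 (u v : E3) : E3 :=
  (WithLp.equiv 2 (Fin 3 → ℝ)).symm
    ![u 1 * v 2 - u 2 * v 1, u 2 * v 0 - u 0 * v 2, u 0 * v 1 - u 1 * v 0]

namespace Stmt16Aux

/-- decomposition of a vector in E3 -/
lemma e3_eq_sum (v : E3) : v = ∑ j : Fin 3, v j • EuclideanSpace.single j (1:ℝ) := by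
  ext i
  simp [Fin.sum_univ_three, EuclideanSpace.single_apply]
  fin_cases i <;> simp

lemma clm_apply_eq_sum (ℓ : E3 →L[ℝ] ℝ) (v : E3) :
    ℓ v = ∑ j : Fin 3, v j * ℓ (EuclideanSpace.single j (1:ℝ)) := by
  conv_lhs => rw [e3_eq_sum v]
  rw [map_sum]
  simp [smul_eq_mul]

lemma fderiv_pi_apply {X : E3 → E3} {x : E3} (hX : DifferentiableAt ℝ X x) (i : Fin 3) (v : E3) :
    fderiv ℝ (fun y => X y i) x v = fderiv ℝ X x v i := by
  have h : HasFDerivAt (fun y => X y i)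
      ((EuclideanSpace.proj (𝕜 := ℝ) i).comp (fderiv ℝ X x)) x :=
    (EuclideanSpace.proj (𝕜 := ℝ) i).hasFDerivAt.comp x hX.hasFDerivAt
  rw [h.fderiv]
  rfl

lemma div3_eq {X : E3 → E3} {x : E3} (hX : DifferentiableAt ℝ X x) :
    div3 X x = ∑ i : Fin 3, fderiv ℝ (fun y => X y i) x (EuclideanSpace.single i 1) := by
  unfold div3
  exact Finset.sum_congr rfl fun i _ => (fderiv_pi_apply hX i _).symm



variable {F : Type*} [NormedAddCommGroup F] [NormedSpace ℝ F]
variable {G : Type*} [NormedAddCommGroup G] [NormedSpace ℝ G]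

/-- assemble a smooth E3-valued map from three smooth components -/
lemma contDiff_mk3 {f0 f1 f2 : G → ℝ} (h0 : ContDiff ℝ (⊤ : ℕ∞) f0) (h1 : ContDiff ℝ (⊤ : ℕ∞) f1)
    (h2 : ContDiff ℝ (⊤ : ℕ∞) f2) :
    ContDiff ℝ (⊤ : ℕ∞) (fun p : G => ((WithLp.equiv 2 (Fin 3 → ℝ)).symm ![f0 p, f1 p, f2 p] : E3)) := by
  have h : ContDiff ℝ (⊤ : ℕ∞) (fun p : G => (![f0 p, f1 p, f2 p] : Fin 3 → ℝ)) := by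
    refine contDiff_pi.2 fun i => ?_
    fin_cases i <;> simpa
  exact ((PiLp.continuousLinearEquiv 2 ℝ (fun _ : Fin 3 => ℝ)).symm.contDiff
    (n := (⊤ : ℕ∞))).comp h

/-- smoothness of a directional fderiv of a smooth map -/
lemma contDiff_fderiv_apply {u : G → F} (hu : ContDiff ℝ (⊤ : ℕ∞) u) (v : G) :
    ContDiff ℝ (⊤ : ℕ∞) (fun p => fderiv ℝ u p v) :=
  (hu.fderiv_right (le_refl _)).clm_apply contDiff_const

lemma hasDerivAt_slice {u : ℝ × E3 → F} (hu : ContDiff ℝ (⊤ : ℕ∞) u) (t : ℝ) (x : E3) :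
    HasDerivAt (fun s => u (s, x)) (fderiv ℝ u (t, x) ((1:ℝ), (0:E3))) t := by
  have h1 : HasFDerivAt u (fderiv ℝ u (t, x)) (t, x) :=
    (hu.differentiable (by simp) (t, x)).hasFDerivAt
  have h2 : HasDerivAt (fun s : ℝ => (s, x)) (((1:ℝ), (0:E3)) : ℝ × E3) t :=
    (hasDerivAt_id t).prodMk (hasDerivAt_const t x)
  exact h1.comp_hasDerivAt t h2

lemma contDiff_space_slice {u : ℝ × E3 → F} (hu : ContDiff ℝ (⊤ : ℕ∞) u) (t : ℝ) :
    ContDiff ℝ (⊤ : ℕ∞) (fun y => u (t, y)) :=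
  hu.comp (contDiff_const.prodMk contDiff_id)

lemma fderiv_space_slice {u : ℝ × E3 → F} (hu : ContDiff ℝ (⊤ : ℕ∞) u) (t : ℝ) (x : E3) (v : E3) :
    fderiv ℝ (fun y => u (t, y)) x v = fderiv ℝ u (t, x) ((0:ℝ), v) := by
  have h2 : HasFDerivAt (fun y : E3 => (t, y))
      (((0 : E3 →L[ℝ] ℝ)).prod (ContinuousLinearMap.id ℝ E3)) x :=
    (hasFDerivAt_const t x).prodMk (hasFDerivAt_id x)
  have h : HasFDerivAt (fun y => u (t, y))
      ((fderiv ℝ u (t, x)).comp (((0 : E3 →L[ℝ] ℝ)).prod (ContinuousLinearMap.id ℝ E3))) x :=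
    ((hu.differentiable (by simp) (t, x)).hasFDerivAt).comp x h2
  rw [h.fderiv]
  rfl


lemma contDiff_proj' {a : E3 → E3} (ha : ContDiff ℝ (⊤ : ℕ∞) a) (i : Fin 3) :
    ContDiff ℝ (⊤ : ℕ∞) (fun y => a y i) :=
  (EuclideanSpace.proj (𝕜 := ℝ) i).contDiff.comp ha

lemma contDiff_cross {a b : E3 → E3} (ha : ContDiff ℝ (⊤ : ℕ∞) a) (hb : ContDiff ℝ (⊤ : ℕ∞) b) :
    ContDiff ℝ (⊤ : ℕ∞) (fun y => cross3 (a y) (b y)) := by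
  unfold cross3
  exact contDiff_mk3
    (((contDiff_proj' ha 1).mul (contDiff_proj' hb 2)).sub
      ((contDiff_proj' ha 2).mul (contDiff_proj' hb 1)))
    (((contDiff_proj' ha 2).mul (contDiff_proj' hb 0)).sub
      ((contDiff_proj' ha 0).mul (contDiff_proj' hb 2)))
    (((contDiff_proj' ha 0).mul (contDiff_proj' hb 1)).sub
      ((contDiff_proj' ha 1).mul (contDiff_proj' hb 0)))

lemma cross3_anti (u v : E3) : cross3 u v = -cross3 v u := by
  ext i
  fin_cases i <;> simp [cross3] <;> ring

lemma div3_smul (c : ℝ) {a : E3 → E3} (ha : Differentiable ℝ a) (x : E3) :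
    div3 (fun y => c • a y) x = c * div3 a x := by
  unfold div3
  rw [Finset.mul_sum]
  refine Finset.sum_congr rfl fun i _ => ?_
  rw [fderiv_fun_const_smul (ha x) c]
  simp [smul_eq_mul]

lemma fderiv_comb_formula (c e' : ℝ) {g1 g2 g3 g4 g5 g6 : E3 → ℝ} {x : E3}
    (h1 : DifferentiableAt ℝ g1 x) (h2 : DifferentiableAt ℝ g2 x)
    (h3 : DifferentiableAt ℝ g3 x) (h4 : DifferentiableAt ℝ g4 x)
    (h5 : DifferentiableAt ℝ g5 x) (h6 : DifferentiableAt ℝ g6 x) (v : E3) :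
    fderiv ℝ (fun y => c * (g1 y * g2 y - g3 y * g4 y) - e' * g5 y * g6 y) x v
      = c * (g1 x * fderiv ℝ g2 x v + g2 x * fderiv ℝ g1 x v
          - (g3 x * fderiv ℝ g4 x v + g4 x * fderiv ℝ g3 x v))
        - (e' * g5 x * fderiv ℝ g6 x v + g6 x * (e' * fderiv ℝ g5 x v)) := by
  have H := ((((h1.hasFDerivAt.mul h2.hasFDerivAt).sub
      (h3.hasFDerivAt.mul h4.hasFDerivAt)).const_mul c).sub
      ((h5.hasFDerivAt.const_mul e').mul h6.hasFDerivAt))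
  rw [show (fun y => c * (g1 y * g2 y - g3 y * g4 y) - e' * g5 y * g6 y) = ((fun y => c * (g1 * g2 - g3 * g4) y) - (fun y => e' * g5 y) * g6) from rfl, H.fderiv]
  simp only [ContinuousLinearMap.sub_apply, ContinuousLinearMap.add_apply,
    ContinuousLinearMap.smul_apply, smul_eq_mul]
  try ring

lemma key_identity (c e' : ℝ) {a b : E3 → E3} {f : E3 → ℝ}
    (ha : ContDiff ℝ (⊤ : ℕ∞) a) (hb : ContDiff ℝ (⊤ : ℕ∞) b) (hf : ContDiff ℝ (⊤ : ℕ∞) f) (x : E3) :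
    div3 (fun y => c • cross3 (a y) (b y) - (e' * f y) • a y) x
      = c * (⟪b x, curl3 a x⟫ - ⟪a x, curl3 b x⟫)
        - e' * (fderiv ℝ f x (a x) + f x * div3 a x) := by
  have hai : ∀ i, DifferentiableAt ℝ (fun y => a y i) x := fun i =>
    ((contDiff_proj' ha i).differentiable (by simp)).differentiableAt
  have hbi : ∀ i, DifferentiableAt ℝ (fun y => b y i) x := fun i =>
    ((contDiff_proj' hb i).differentiable (by simp)).differentiableAt
  have hfi : DifferentiableAt ℝ f x := (hf.differentiable (by simp)).differentiableAt
  have hX : ContDiff ℝ (⊤ : ℕ∞) (fun y => c • cross3 (a y) (b y) - (e' * f y) • a y) :=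
    ((contDiff_cross ha hb).const_smul c).sub
      (ContDiff.smul (contDiff_const.mul hf) ha)
  rw [div3_eq ((hX.differentiable (by simp)).differentiableAt)]
  have comp0 : (fun y => (c • cross3 (a y) (b y) - (e' * f y) • a y : E3) 0)
      = fun y => c * ((fun y => a y 1) y * (fun y => b y 2) y
          - (fun y => a y 2) y * (fun y => b y 1) y) - e' * f y * (fun y => a y 0) y := by
    funext y; simp [cross3]; try ring
  have comp1 : (fun y => (c • cross3 (a y) (b y) - (e' * f y) • a y : E3) 1)
      = fun y => c * ((fun y => a y 2) y * (fun y => b y 0) y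
          - (fun y => a y 0) y * (fun y => b y 2) y) - e' * f y * (fun y => a y 1) y := by
    funext y; simp [cross3]; try ring
  have comp2 : (fun y => (c • cross3 (a y) (b y) - (e' * f y) • a y : E3) 2)
      = fun y => c * ((fun y => a y 0) y * (fun y => b y 1) y
          - (fun y => a y 1) y * (fun y => b y 0) y) - e' * f y * (fun y => a y 2) y := by
    funext y; simp [cross3]; try ring
  rw [Fin.sum_univ_three, comp0, comp1, comp2,
    fderiv_comb_formula c e' (hai 1) (hbi 2) (hai 2) (hbi 1) hfi (hai 0),
    fderiv_comb_formula c e' (hai 2) (hbi 0) (hai 0) (hbi 2) hfi (hai 1),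
    fderiv_comb_formula c e' (hai 0) (hbi 1) (hai 1) (hbi 0) hfi (hai 2),
    div3_eq ((ha.differentiable (by simp)).differentiableAt),
    clm_apply_eq_sum (fderiv ℝ f x) (a x)]
  simp only [PiLp.inner_apply, RCLike.inner_apply, starRingEnd_apply, star_trivial,
    Fin.sum_univ_three, curl3, WithLp.equiv_symm_apply, PiLp.toLp_apply, Matrix.cons_val_zero,
    Matrix.cons_val_one, Matrix.head_cons, Matrix.cons_val_two, Matrix.tail_cons]
  ring

lemma inner_gradient (f : E3 → ℝ) (x v : E3) : ⟪v, gradient f x⟫ = fderiv ℝ f x v := by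
  rw [real_inner_comm]
  unfold gradient
  exact InnerProductSpace.toDual_symm_apply

lemma curl3_slice {u : ℝ × E3 → E3} (hu : ContDiff ℝ (⊤ : ℕ∞) u) (t : ℝ) (x : E3) :
    curl3 (fun y => u (t, y)) x = (WithLp.equiv 2 (Fin 3 → ℝ)).symm
      ![fderiv ℝ u (t, x) ((0:ℝ), EuclideanSpace.single 1 1) 2 -
          fderiv ℝ u (t, x) ((0:ℝ), EuclideanSpace.single 2 1) 1,
        fderiv ℝ u (t, x) ((0:ℝ), EuclideanSpace.single 2 1) 0 -
          fderiv ℝ u (t, x) ((0:ℝ), EuclideanSpace.single 0 1) 2,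
        fderiv ℝ u (t, x) ((0:ℝ), EuclideanSpace.single 0 1) 1 -
          fderiv ℝ u (t, x) ((0:ℝ), EuclideanSpace.single 1 1) 0] := by
  have hdiff : DifferentiableAt ℝ (fun y => u (t, y)) x :=
    ((contDiff_space_slice hu t).differentiable (by simp)).differentiableAt
  have hcomp : ∀ (i : Fin 3) (v : E3),
      fderiv ℝ (fun y => u (t, y) i) x v = fderiv ℝ u (t, x) ((0:ℝ), v) i := by
    intro i v
    rw [fderiv_pi_apply hdiff i v, fderiv_space_slice hu t x v]
  unfold curl3
  rw [hcomp 2 _, hcomp 1 _, hcomp 0 _, hcomp 2 _, hcomp 1 _, hcomp 0 _]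

lemma contDiff_curl_slice {u : ℝ × E3 → E3} (hu : ContDiff ℝ (⊤ : ℕ∞) u) :
    ContDiff ℝ (⊤ : ℕ∞) (fun p : ℝ × E3 => curl3 (fun y => u (p.1, y)) p.2) := by
  have hcomp : ∀ (i : Fin 3) (v : ℝ × E3),
      ContDiff ℝ (⊤ : ℕ∞) (fun p : ℝ × E3 => fderiv ℝ u p v i) := fun i v =>
    (EuclideanSpace.proj (𝕜 := ℝ) i).contDiff.comp (contDiff_fderiv_apply hu v)
  have heq : (fun p : ℝ × E3 => curl3 (fun y => u (p.1, y)) p.2)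
      = fun p : ℝ × E3 => ((WithLp.equiv 2 (Fin 3 → ℝ)).symm
          ![fderiv ℝ u p ((0:ℝ), EuclideanSpace.single 1 1) 2 -
              fderiv ℝ u p ((0:ℝ), EuclideanSpace.single 2 1) 1,
            fderiv ℝ u p ((0:ℝ), EuclideanSpace.single 2 1) 0 -
              fderiv ℝ u p ((0:ℝ), EuclideanSpace.single 0 1) 2,
            fderiv ℝ u p ((0:ℝ), EuclideanSpace.single 0 1) 1 -
              fderiv ℝ u p ((0:ℝ), EuclideanSpace.single 1 1) 0] : E3) := by
    funext p
    rw [curl3_slice hu p.1 p.2]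
  rw [heq]
  exact contDiff_mk3 (((hcomp 2 _).sub (hcomp 1 _))) (((hcomp 0 _).sub (hcomp 2 _)))
    (((hcomp 1 _).sub (hcomp 0 _)))

lemma continuous_div3 {X : E3 → E3} (hX : ContDiff ℝ (⊤ : ℕ∞) X) : Continuous (div3 X) := by
  unfold div3
  refine continuous_finset_sum _ fun i _ => ?_
  exact (EuclideanSpace.proj (𝕜 := ℝ) i).continuous.comp
    (contDiff_fderiv_apply hX (EuclideanSpace.single i 1)).continuous

noncomputable def tdv {F : Type*} [NormedAddCommGroup F] [NormedSpace ℝ F]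
    (u : ℝ × E3 → F) (p : ℝ × E3) : F := fderiv ℝ u p ((1:ℝ), (0:E3))

lemma tdv_contDiff {F : Type*} [NormedAddCommGroup F] [NormedSpace ℝ F]
    {u : ℝ × E3 → F} (hu : ContDiff ℝ (⊤ : ℕ∞) u) : ContDiff ℝ (⊤ : ℕ∞) (tdv u) :=
  contDiff_fderiv_apply hu _

lemma hasDerivAt_tdv {F : Type*} [NormedAddCommGroup F] [NormedSpace ℝ F]
    {u : ℝ × E3 → F} (hu : ContDiff ℝ (⊤ : ℕ∞) u) (t : ℝ) (x : E3) :
    HasDerivAt (fun s => u (s, x)) (tdv u (t, x)) t :=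
  hasDerivAt_slice hu t x

end Stmt16Aux


open Stmt16Aux

/-- Continuous energy balance for the vector potential under the generalized
Lorenz gauge: with `B = ∇×A`, `∂B/∂t = ∇×(∂A/∂t)`,
`ε ∂²A/∂t² = -∇×(μ⁻¹ ∇×A) - ε∇κ` and `χ ∂κ/∂t = -∇·(ε ∂A/∂t)` on a bounded
region `V` with constant `ε, μ > 0`, `χ = με²` (divergence theorem encoded via
the boundary measure `σ` and outward unit normal `n̂`), the energy
`E(t) = ∫_V [(1/(2μ))|B|² + (ε/2)|∂A/∂t|² + (χ/2)κ²] dV` satisfies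
`dE/dt = ∮_{∂V} (μ⁻¹ B × ∂A/∂t + ε κ ∂A/∂t) · (-n̂) dS`. -/
theorem stmt16 (ε μ χ : ℝ) (hε : 0 < ε) (hμ : 0 < μ) (hχ : χ = μ * ε ^ 2)
    (V : Set E3) (hVbdd : Bornology.IsBounded V)
    (σ : Measure E3) (nhat : E3 → E3)
    (hnhat : ∀ x ∈ frontier V, ‖nhat x‖ = 1)
    (hdivthm : ∀ X : E3 → E3, ContDiff ℝ (⊤ : ℕ∞) X →
      (∫ x in V, div3 X x) = ∫ x in frontier V, ⟪X x, nhat x⟫ ∂σ)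
    (A : ℝ → E3 → E3) (B : ℝ → E3 → E3) (κ : ℝ → E3 → ℝ)
    (hA : ContDiff ℝ (⊤ : ℕ∞) (fun p : ℝ × E3 => A p.1 p.2))
    (hκ : ContDiff ℝ (⊤ : ℕ∞) (fun p : ℝ × E3 => κ p.1 p.2))
    (hB : ∀ t x, B t x = curl3 (A t) x)
    (hBt : ∀ t : ℝ, ∀ x ∈ V, deriv (fun s => B s x) t =
      curl3 (fun y => deriv (fun s => A s y) t) x)
    (hAeq : ∀ t : ℝ, ∀ x ∈ V,
      ε • deriv (fun s => deriv (fun r => A r x) s) t =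
        -(μ⁻¹ • curl3 (fun y => curl3 (A t) y) x) -
          ε • gradient (κ t) x)
    (hκeq : ∀ t : ℝ, ∀ x ∈ V,
      χ * deriv (fun s => κ s x) t =
        -div3 (fun y => ε • deriv (fun s => A s y) t) x)
    (E : ℝ → ℝ)
    (hE : ∀ t, E t = ∫ x in V,
      ((1 / (2 * μ)) * ‖B t x‖ ^ 2 +
        (ε / 2) * ‖deriv (fun s => A s x) t‖ ^ 2 +
        (χ / 2) * (κ t x) ^ 2)) :
    ∀ t : ℝ, HasDerivAt E
      (∫ x in frontier V,
        ⟪μ⁻¹ • cross3 (B t x) (deriv (fun s => A s x) t) +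
          (ε * κ t x) • deriv (fun s => A s x) t, -nhat x⟫ ∂σ) t := by
  classical
  -- local abbreviations
  set U : ℝ × E3 → E3 := fun p => A p.1 p.2 with hU_def
  set K : ℝ × E3 → ℝ := fun p => κ p.1 p.2 with hK_def
  set BF : ℝ × E3 → E3 := fun p => curl3 (fun y => U (p.1, y)) p.2 with hBF_def
  have hAT : ContDiff ℝ (⊤ : ℕ∞) (tdv U) := tdv_contDiff hA
  have hBFc : ContDiff ℝ (⊤ : ℕ∞) BF := contDiff_curl_slice hA
  have hATT : ContDiff ℝ (⊤ : ℕ∞) (tdv (tdv U)) := tdv_contDiff hAT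
  have hKT : ContDiff ℝ (⊤ : ℕ∞) (tdv K) := tdv_contDiff hκ
  have hBT : ContDiff ℝ (⊤ : ℕ∞) (tdv BF) := tdv_contDiff hBFc
  have hderivA : ∀ t x, deriv (fun s => A s x) t = tdv U (t, x) := fun t x =>
    (hasDerivAt_tdv hA t x).deriv
  have hBBF : ∀ t x, B t x = BF (t, x) := fun t x => hB t x
  -- integrand and its time derivative
  set Fi : ℝ × E3 → ℝ := fun p => (1 / (2 * μ)) * ‖BF p‖ ^ 2 +
      (ε / 2) * ‖tdv U p‖ ^ 2 + (χ / 2) * (K p) ^ 2 with hFi_def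
  set g : ℝ × E3 → ℝ := fun p => μ⁻¹ * ⟪BF p, tdv BF p⟫ +
      ε * ⟪tdv U p, tdv (tdv U) p⟫ + χ * (K p * tdv K p) with hg_def
  have hFicont : Continuous Fi := by
    refine ((continuous_const.mul ((hBFc.continuous.norm).pow 2)).add
      (continuous_const.mul ((hAT.continuous.norm).pow 2))).add
      (continuous_const.mul ((hκ.continuous).pow 2))
  have hgcont : Continuous g := by
    refine ((continuous_const.mul (hBFc.continuous.inner hBT.continuous)).add
      (continuous_const.mul (hAT.continuous.inner hATT.continuous))).add
      (continuous_const.mul ((hκ.continuous).mul hKT.continuous))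
  have hFd : ∀ t x, HasDerivAt (fun s => Fi (s, x)) (g (t, x)) t := by
    intro t x
    have h1 : HasDerivAt (fun s => BF (s, x)) (tdv BF (t, x)) t := hasDerivAt_tdv hBFc t x
    have h2 : HasDerivAt (fun s => tdv U (s, x)) (tdv (tdv U) (t, x)) t :=
      hasDerivAt_tdv hAT t x
    have h3 : HasDerivAt (fun s => K (s, x)) (tdv K (t, x)) t := hasDerivAt_tdv hκ t x
    have hB2 : HasDerivAt (fun s => ‖BF (s, x)‖ ^ 2)
        (⟪BF (t, x), tdv BF (t, x)⟫ + ⟪tdv BF (t, x), BF (t, x)⟫) t := by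
      have := HasDerivAt.inner ℝ h1 h1
      simpa only [real_inner_self_eq_norm_sq] using this
    have hA2 : HasDerivAt (fun s => ‖tdv U (s, x)‖ ^ 2)
        (⟪tdv U (t, x), tdv (tdv U) (t, x)⟫ + ⟪tdv (tdv U) (t, x), tdv U (t, x)⟫) t := by
      have := HasDerivAt.inner ℝ h2 h2
      simpa only [real_inner_self_eq_norm_sq] using this
    have hK2 : HasDerivAt (fun s => (K (s, x)) ^ 2)
        (2 * (K (t, x)) ^ 1 * tdv K (t, x)) t := h3.pow 2
    have hsum := ((hB2.const_mul (1 / (2 * μ))).add (hA2.const_mul (ε / 2))).add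
      (hK2.const_mul (χ / 2))
    refine hsum.congr_deriv ?_
    rw [hg_def]
    simp only []
    rw [real_inner_comm (tdv BF (t, x)) (BF (t, x)),
      real_inner_comm (tdv (tdv U) (t, x)) (tdv U (t, x))]
    field_simp
    ring
  -- energy as parametric integral
  have hEeq : E = fun t => ∫ x in V, Fi (t, x) := by
    funext t
    rw [hE t]
    congr 1
    funext x
    rw [hBBF t x, hderivA t x]
  -- finiteness of the restricted measure
  obtain ⟨R, hR⟩ := hVbdd.subset_closedBall (0 : E3)
  haveI : IsFiniteMeasure (volume.restrict V) := by
    constructor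
    rw [Measure.restrict_apply_univ]
    exact lt_of_le_of_lt (measure_mono hR) (measure_closedBall_lt_top)
  have hae : ∀ᵐ x ∂(volume.restrict V), x ∈ closure V := by
    rw [ae_iff]
    have h1 : {x | ¬ x ∈ closure V} = (closure V)ᶜ := rfl
    rw [h1, Measure.restrict_apply isClosed_closure.measurableSet.compl]
    have h2 : (closure V)ᶜ ∩ V = ∅ := by
      rw [Set.eq_empty_iff_forall_notMem]
      exact fun x hx => hx.1 (subset_closure hx.2)
    rw [h2, measure_empty]
  have hclV : IsCompact (closure V) :=
    Metric.isCompact_of_isClosed_isBounded isClosed_closure hVbdd.closure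
  -- the main derivative computation
  intro t₀
  rw [hEeq]
  -- dominated convergence data
  have hKc : IsCompact ((Set.Icc (t₀ - 1) (t₀ + 1)) ×ˢ closure V) := isCompact_Icc.prod hclV
  obtain ⟨C, hC⟩ := hKc.exists_bound_of_continuousOn hgcont.continuousOn
  obtain ⟨C₁, hC₁⟩ := hclV.exists_bound_of_continuousOn
    (hFicont.comp (Continuous.prodMk_right t₀)).continuousOn
  have key := (hasDerivAt_integral_of_dominated_loc_of_deriv_le
    (F := fun t x => Fi (t, x)) (F' := fun t x => g (t, x)) (bound := fun _ => C)
    (μ := volume.restrict V) (x₀ := t₀) (s := Metric.ball t₀ 1) (Metric.ball_mem_nhds t₀ one_pos)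
    (Filter.Eventually.of_forall fun s =>
      (hFicont.comp (Continuous.prodMk_right s)).aestronglyMeasurable)
    ((integrable_const C₁).mono'
      (hFicont.comp (Continuous.prodMk_right t₀)).aestronglyMeasurable
      (hae.mono fun x hx => hC₁ x hx))
    (hgcont.comp (Continuous.prodMk_right t₀)).aestronglyMeasurable
    (hae.mono fun x hx s hs => by
      refine hC (s, x) ⟨?_, hx⟩
      have := Metric.mem_ball.1 hs
      rw [Real.dist_eq] at this
      constructor <;> [linarith [abs_lt.1 this |>.1]; linarith [abs_lt.1 this |>.2]])
    (integrable_const C)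
    (Filter.Eventually.of_forall fun x s _ => hFd s x)).2
  -- identify the derivative with the boundary integral
  have hval : (∫ x in V, g (t₀, x)) =
      ∫ x in frontier V,
        ⟪μ⁻¹ • cross3 (B t₀ x) (deriv (fun s => A s x) t₀) +
          (ε * κ t₀ x) • deriv (fun s => A s x) t₀, -nhat x⟫ ∂σ := by
    have hac : ContDiff ℝ (⊤ : ℕ∞) (fun y => tdv U (t₀, y)) := contDiff_space_slice hAT t₀
    have hbc : ContDiff ℝ (⊤ : ℕ∞) (fun y => BF (t₀, y)) := contDiff_space_slice hBFc t₀
    have hfc : ContDiff ℝ (⊤ : ℕ∞) (κ t₀) := contDiff_space_slice hκ t₀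
    set XF : E3 → E3 := fun y =>
      μ⁻¹ • cross3 (tdv U (t₀, y)) (BF (t₀, y)) - (ε * κ t₀ y) • tdv U (t₀, y) with hXF_def
    have hXFc : ContDiff ℝ (⊤ : ℕ∞) XF :=
      ((contDiff_cross hac hbc).const_smul μ⁻¹).sub ((contDiff_const.mul hfc).smul hac)
    have hkey : ∀ x : E3, div3 XF x
        = μ⁻¹ * (⟪BF (t₀, x), curl3 (fun y => tdv U (t₀, y)) x⟫ -
            ⟪tdv U (t₀, x), curl3 (fun y => BF (t₀, y)) x⟫)
          - ε * (fderiv ℝ (κ t₀) x (tdv U (t₀, x)) +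
              κ t₀ x * div3 (fun y => tdv U (t₀, y)) x) := by
      intro x
      have h := key_identity (a := fun y => tdv U (t₀, y)) (b := fun y => BF (t₀, y))
        (f := κ t₀) μ⁻¹ ε hac hbc hfc x
      simpa only [] using h
    have hgid : ∀ x ∈ V, g (t₀, x) = div3 XF x := by
      intro x hx
      have h1 : tdv BF (t₀, x) = curl3 (fun y => tdv U (t₀, y)) x := by
        have hfun : (fun s => B s x) = fun s => BF (s, x) := funext fun s => hBBF s x
        have hd : deriv (fun s => B s x) t₀ = tdv BF (t₀, x) := by
          rw [hfun]; exact (hasDerivAt_tdv hBFc t₀ x).deriv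
        have hfun2 : (fun y => deriv (fun s => A s y) t₀) = fun y => tdv U (t₀, y) :=
          funext fun y => hderivA t₀ y
        rw [← hd, hBt t₀ x hx, hfun2]
      have h2 : ε • tdv (tdv U) (t₀, x)
          = -(μ⁻¹ • curl3 (fun y => BF (t₀, y)) x) - ε • gradient (κ t₀) x := by
        have hfun : (fun s => deriv (fun r => A r x) s) = fun s => tdv U (s, x) :=
          funext fun s => hderivA s x
        have hd : deriv (fun s => deriv (fun r => A r x) s) t₀ = tdv (tdv U) (t₀, x) := by
          rw [hfun]; exact (hasDerivAt_tdv hAT t₀ x).deriv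
        rw [← hd]
        exact hAeq t₀ x hx
      have h3 : χ * tdv K (t₀, x) = -(ε * div3 (fun y => tdv U (t₀, y)) x) := by
        have hd : deriv (fun s => κ s x) t₀ = tdv K (t₀, x) := (hasDerivAt_tdv hκ t₀ x).deriv
        have h := hκeq t₀ x hx
        rw [hd] at h
        rw [h]
        have hfun : (fun y => ε • deriv (fun s => A s y) t₀) = fun y => ε • tdv U (t₀, y) :=
          funext fun y => by rw [hderivA t₀ y]
        rw [hfun, div3_smul ε (hac.differentiable (by simp)) x]
      have e2 : ε * ⟪tdv U (t₀, x), tdv (tdv U) (t₀, x)⟫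
          = -(μ⁻¹ * ⟪tdv U (t₀, x), curl3 (fun y => BF (t₀, y)) x⟫)
            - ε * fderiv ℝ (κ t₀) x (tdv U (t₀, x)) := by
        rw [← real_inner_smul_right, h2, inner_sub_right, inner_neg_right,
          real_inner_smul_right, real_inner_smul_right, inner_gradient]
      have e3 : χ * (K (t₀, x) * tdv K (t₀, x))
          = -(ε * (κ t₀ x * div3 (fun y => tdv U (t₀, y)) x)) := by
        have hr : χ * (K (t₀, x) * tdv K (t₀, x)) = K (t₀, x) * (χ * tdv K (t₀, x)) := by ring
        rw [hr, h3]
        show κ t₀ x * -(ε * div3 (fun y => tdv U (t₀, y)) x) = _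
        ring
      show μ⁻¹ * ⟪BF (t₀, x), tdv BF (t₀, x)⟫ +
          ε * ⟪tdv U (t₀, x), tdv (tdv U) (t₀, x)⟫ +
          χ * (K (t₀, x) * tdv K (t₀, x)) = div3 XF x
      rw [hkey x, h1, e2, e3]
      ring
    have hEqOn : Set.EqOn (fun x => g (t₀, x)) (div3 XF) (closure V) :=
      Set.EqOn.closure (fun x hx => hgid x hx)
        (hgcont.comp (Continuous.prodMk_right t₀)) (continuous_div3 hXFc)
    have hint1 : (∫ x in V, g (t₀, x)) = ∫ x in V, div3 XF x :=
      integral_congr_ae (hae.mono fun x hx => hEqOn hx)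
    rw [hint1, hdivthm XF hXFc]
    refine integral_congr_ae (Filter.Eventually.of_forall fun x => ?_)
    have hv : XF x = -(μ⁻¹ • cross3 (B t₀ x) (deriv (fun s => A s x) t₀) +
        (ε * κ t₀ x) • deriv (fun s => A s x) t₀) := by
      rw [hXF_def]
      simp only []
      rw [hBBF t₀ x, hderivA t₀ x, cross3_anti (BF (t₀, x)) (tdv U (t₀, x)), smul_neg]
      abel
    show ⟪XF x, nhat x⟫ = _
    rw [hv]
    simp only [inner_neg_left, inner_neg_right]
  rw [← hval]
  exact key
end

section
/- Let R be symmetric positive definite and F skew-symmetric, both n×n, and let G = (R+F)^{-1}(R-F). Then every complex eigenvalue λ of G satisfies |λ| = 1. -/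
open Matrix

lemma conj_quad19 {n : ℕ} (M : Matrix (Fin n) (Fin n) ℝ) (v : Fin n → ℂ) :
    (starRingEnd ℂ) (star v ⬝ᵥ ((M.map Complex.ofReal) *ᵥ v)) =
      star v ⬝ᵥ ((Mᵀ.map Complex.ofReal) *ᵥ v) := by
  simp only [dotProduct, mulVec, Pi.star_apply, map_sum, Complex.conj_ofReal,
    Matrix.map_apply, transpose_apply, Finset.mul_sum]
  rw [Finset.sum_comm]
  refine Finset.sum_congr rfl fun i _ => Finset.sum_congr rfl fun j _ => ?_
  simp only [Complex.star_def, _root_.map_mul, Complex.conj_ofReal, Complex.conj_conj]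
  ring

lemma re_quad19 {n : ℕ} (M : Matrix (Fin n) (Fin n) ℝ) (v : Fin n → ℂ) :
    (star v ⬝ᵥ ((M.map Complex.ofReal) *ᵥ v)).re =
      (fun i => (v i).re) ⬝ᵥ (M *ᵥ fun i => (v i).re) +
      (fun i => (v i).im) ⬝ᵥ (M *ᵥ fun i => (v i).im) := by
  simp only [dotProduct, mulVec, Pi.star_apply, Matrix.map_apply, Finset.mul_sum,
    Complex.re_sum, ← Finset.sum_add_distrib]
  refine Finset.sum_congr rfl fun i _ => Finset.sum_congr rfl fun j _ => ?_
  simp only [Complex.mul_re, Complex.mul_im, Complex.ofReal_re, Complex.ofReal_im,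
    RCLike.star_def, Complex.conj_re, Complex.conj_im]
  ring

/-- Every complex eigenvalue `λ` of the Cayley-type iteration matrix
`G = (R+F)⁻¹(R-F)`, with `R` symmetric positive definite and `F`
skew-symmetric, satisfies `|λ| = 1`. -/
theorem stmt19 {n : ℕ} (R F : Matrix (Fin n) (Fin n) ℝ)
    (hRsym : Rᵀ = R) (hRpd : ∀ x : Fin n → ℝ, x ≠ 0 → 0 < x ⬝ᵥ (R *ᵥ x))
    (hF : Fᵀ = -F) (G : Matrix (Fin n) (Fin n) ℝ)
    (hG : G = (R + F)⁻¹ * (R - F)) :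
    ∀ (μ : ℂ) (v : Fin n → ℂ), v ≠ 0 →
      (G.map (Complex.ofReal : ℝ → ℂ)) *ᵥ v = μ • v → ‖μ‖ = 1 := by
  intro μ v hv hev
  -- skew part kills the quadratic form over ℝ
  have hskew : ∀ x : Fin n → ℝ, x ⬝ᵥ (F *ᵥ x) = 0 := by
    intro x
    have h1 : x ⬝ᵥ (F *ᵥ x) = (Fᵀ *ᵥ x) ⬝ᵥ x := by
      rw [Matrix.dotProduct_mulVec, Matrix.mulVec_transpose]
    have h2 : x ⬝ᵥ (F *ᵥ x) = -(x ⬝ᵥ (F *ᵥ x)) :=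
      calc x ⬝ᵥ (F *ᵥ x) = (Fᵀ *ᵥ x) ⬝ᵥ x := h1
        _ = ((-F) *ᵥ x) ⬝ᵥ x := by rw [hF]
        _ = -((F *ᵥ x) ⬝ᵥ x) := by rw [Matrix.neg_mulVec, neg_dotProduct]
        _ = -(x ⬝ᵥ (F *ᵥ x)) := by rw [dotProduct_comm]
    linarith
  -- R+F is invertible over ℝ
  have hAdet : IsUnit (R + F).det := by
    rw [isUnit_iff_ne_zero]
    intro hdet
    obtain ⟨x, hx0, hx⟩ := (Matrix.exists_mulVec_eq_zero_iff).2 hdet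
    have : (0:ℝ) < x ⬝ᵥ ((R + F) *ᵥ x) := by
      rw [Matrix.add_mulVec, dotProduct_add, hskew, add_zero]
      exact hRpd x hx0
    rw [hx, dotProduct_zero] at this
    exact lt_irrefl 0 this
  have key : (R + F) * G = R - F := by
    rw [hG, ← Matrix.mul_assoc, Matrix.mul_nonsing_inv _ hAdet, Matrix.one_mul]
  have keyC : ((R + F).map (Complex.ofReal : ℝ → ℂ)) * (G.map Complex.ofReal) =
      (R - F).map Complex.ofReal := by
    have h := Matrix.map_mul (L := R + F) (M := G) (f := Complex.ofRealHom)
    rw [key] at h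
    exact h.symm
  have h1 : ((R + F).map (Complex.ofReal : ℝ → ℂ)) *ᵥ (μ • v) =
      ((R - F).map Complex.ofReal) *ᵥ v := by
    rw [← hev, Matrix.mulVec_mulVec, keyC]
  set r := star v ⬝ᵥ ((R.map (Complex.ofReal : ℝ → ℂ)) *ᵥ v) with hrdef
  set f := star v ⬝ᵥ ((F.map (Complex.ofReal : ℝ → ℂ)) *ᵥ v) with hfdef
  have hmapadd : (R + F).map (Complex.ofReal : ℝ → ℂ) = R.map Complex.ofReal + F.map Complex.ofReal := by
    ext i j; simp
  have hmapsub : (R - F).map (Complex.ofReal : ℝ → ℂ) = R.map Complex.ofReal - F.map Complex.ofReal := by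
    ext i j; simp
  have h2 : μ * (r + f) = r - f := by
    have := congrArg (fun w : Fin n → ℂ => star v ⬝ᵥ w) h1
    simpa [hmapadd, hmapsub, Matrix.add_mulVec, Matrix.sub_mulVec, Matrix.mulVec_smul,
      dotProduct_add, dotProduct_sub, dotProduct_smul, smul_eq_mul, mul_add, hrdef, hfdef]
      using this
  -- conjugation facts
  have hrc : (starRingEnd ℂ) r = r := by
    have := conj_quad19 R v
    rwa [hRsym] at this
  have hfc : (starRingEnd ℂ) f = -f := by
    have := conj_quad19 F v
    rw [hF] at this
    have hneg : ((-F).map (Complex.ofReal : ℝ → ℂ)) = -(F.map Complex.ofReal) := by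
      ext i j; simp
    rw [hneg, Matrix.neg_mulVec, dotProduct_neg] at this
    exact this
  have hf_re : f.re = 0 := by
    have := congrArg Complex.re hfc
    simp only [Complex.conj_re, Complex.neg_re] at this
    linarith
  -- positivity of r.re
  have hnn : ∀ x : Fin n → ℝ, 0 ≤ x ⬝ᵥ (R *ᵥ x) := by
    intro x
    rcases eq_or_ne x 0 with h | h
    · simp [h]
    · exact (hRpd x h).le
  have hr_re : 0 < r.re := by
    rw [hrdef, re_quad19]
    set a : Fin n → ℝ := fun i => (v i).re with hadef
    set b : Fin n → ℝ := fun i => (v i).im with hbdef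
    have hab : a ≠ 0 ∨ b ≠ 0 := by
      by_contra h
      push_neg at h
      apply hv
      funext i
      have ha := congrFun h.1 i
      have hb := congrFun h.2 i
      simp only [hadef, hbdef, Pi.zero_apply] at ha hb
      exact Complex.ext ha hb
    rcases hab with h | h
    · exact add_pos_of_pos_of_nonneg (hRpd a h) (hnn b)
    · exact add_pos_of_nonneg_of_pos (hnn a) (hRpd b h)
  have hpos : (0:ℝ) < (r + f).re := by
    rw [Complex.add_re, hf_re, add_zero]; exact hr_re
  have hne : r + f ≠ 0 := by
    intro h
    rw [h, Complex.zero_re] at hpos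
    exact lt_irrefl 0 hpos
  have habs : ‖r - f‖ = ‖r + f‖ := by
    have hconj : r - f = (starRingEnd ℂ) (r + f) := by
      rw [map_add, hrc, hfc]; ring
    rw [hconj, Complex.norm_conj]
  have := congrArg (‖·‖) h2
  rw [norm_mul, habs] at this
  have habne : ‖r + f‖ ≠ 0 := by
    simpa using hne
  exact mul_right_cancel₀ habne (by rw [this, one_mul])
end
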